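/- Let A be a positive definite Hermitian d×d complex matrix. Then log A = ∫₀^∞ ( (1+s)⁻¹·I − (A + s·I)⁻¹ ) ds, where the integral of the matrix-valued function converges entrywise (equivalently, in the Bochner sense). -/

import Mathlib

open Matrix MeasureTheory
open scoped ComplexOrder

noncomputable section

/-- Logarithm of a matrix: for a Hermitian matrix, apply the real logarithm to the
eigenvalues via the spectral decomposition (functional calculus); junk value `0`
for non-Hermitian matrices. -/
def matLog {d : ℕ} (A : Matrix (Fin d) (Fin d) ℂ) : Matrix (Fin d) (Fin d) ℂ :=
  if hA : A.IsHermitian then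
    (hA.eigenvectorUnitary : Matrix (Fin d) (Fin d) ℂ) *
      Matrix.diagonal (fun i => (Real.log (hA.eigenvalues i) : ℂ)) *
      (star hA.eigenvectorUnitary : Matrix (Fin d) (Fin d) ℂ)
  else 0

/-- The absolute value `|A| = √(AᴴA)` of a matrix. -/
def matAbs {d : ℕ} (A : Matrix (Fin d) (Fin d) ℂ) : Matrix (Fin d) (Fin d) ℂ :=
  ((Matrix.posSemidef_conjTranspose_mul_self A).1.eigenvectorUnitary : Matrix (Fin d) (Fin d) ℂ) *
    Matrix.diagonal ((↑) ∘ (√·) ∘ (Matrix.posSemidef_conjTranspose_mul_self A).1.eigenvalues) *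
    (star (Matrix.posSemidef_conjTranspose_mul_self A).1.eigenvectorUnitary : Matrix (Fin d) (Fin d) ℂ)

/-- The trace norm `‖A‖₁ = tr √(AᴴA)`. -/
def traceNorm {d : ℕ} (A : Matrix (Fin d) (Fin d) ℂ) : ℝ :=
  ((matAbs A).trace).re

/-- The positive part `A₊ = (A + |A|)/2` of a (Hermitian) matrix. -/
def matPos {d : ℕ} (A : Matrix (Fin d) (Fin d) ℂ) : Matrix (Fin d) (Fin d) ℂ :=
  (2⁻¹ : ℂ) • (A + matAbs A)

/-- The negative part `A₋ = (|A| − A)/2` of a (Hermitian) matrix. -/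
def matNeg {d : ℕ} (A : Matrix (Fin d) (Fin d) ℂ) : Matrix (Fin d) (Fin d) ℂ :=
  (2⁻¹ : ℂ) • (matAbs A - A)

/-- The quantum relative entropy `S(ρ‖σ) = tr ρ (log ρ − log σ)`. -/
def relEnt {d : ℕ} (ρ σ : Matrix (Fin d) (Fin d) ℂ) : ℝ :=
  ((ρ * (matLog ρ - matLog σ)).trace).re

/-- Smallest eigenvalue of a Hermitian matrix. -/
def lamMin {d : ℕ} {A : Matrix (Fin d) (Fin d) ℂ} (hA : A.IsHermitian) : ℝ :=
  ⨅ i, hA.eigenvalues i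

/-- The asymmetry function of the binary Kullback–Leibler divergence:
`a(p,t) = (2p+t)·log(1+t/p) + (2(1−p)−t)·log(1−t/(1−p))`. -/
def asym (p t : ℝ) : ℝ :=
  (2 * p + t) * Real.log (1 + t / p) + (2 * (1 - p) - t) * Real.log (1 - t / (1 - p))

attribute [local instance] Matrix.frobeniusNormedAddCommGroup Matrix.frobeniusNormedSpace

instance matFrobeniusContinuousENorm {d : ℕ} : ContinuousENorm (Matrix (Fin d) (Fin d) ℂ) :=
  SeminormedAddGroup.toContinuousENorm

/-! For `λ > 0` the scalar identity `log λ = ∫₀^∞ ((1+s)⁻¹ - (λ+s)⁻¹) ds` holds because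
`log (1+s) - log (λ+s)` is a primitive of the integrand that tends to `0` at `∞` and equals `-log λ`
at `0`. The integrand at `A` is the functional calculus of `A` applied to the scalar integrand, and
for a Hermitian matrix the functional calculus `f ↦ U diag(f ∘ λ) Uᴴ` factors through a continuous
linear map, so it commutes with the integral. -/

open Set Filter Topology Real

theorem hasDerivAt_log_add_sub_log_add {a b x : ℝ} (ha : a + x ≠ 0) (hb : b + x ≠ 0) :
    HasDerivAt (fun s => log (a + s) - log (b + s)) ((a + x)⁻¹ - (b + x)⁻¹) x := by
  simpa only [id_eq, one_div] using (((hasDerivAt_id x).const_add a).log ha).fun_sub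
    (((hasDerivAt_id x).const_add b).log hb)

theorem tendsto_log_add_sub_log_add_atTop (a b : ℝ) :
    Tendsto (fun s => log (a + s) - log (b + s)) atTop (𝓝 0) := by
  simpa [add_comm] using (tendsto_log_comp_add_sub_log a).sub (tendsto_log_comp_add_sub_log b)

theorem integrableOn_and_integral_Ioi_inv_add_sub_inv_add {a b : ℝ} (ha : 0 < a) (hb : 0 < b) :
    IntegrableOn (fun s => (a + s)⁻¹ - (b + s)⁻¹) (Ioi 0) ∧
      ∫ s in Ioi (0 : ℝ), ((a + s)⁻¹ - (b + s)⁻¹) = log b - log a := by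
  wlog hab : a ≤ b generalizing a b
  · obtain ⟨hint, hval⟩ := this hb ha (le_of_not_ge hab)
    have hneg : (fun s : ℝ => (a + s)⁻¹ - (b + s)⁻¹) = fun s => -((b + s)⁻¹ - (a + s)⁻¹) := by
      simp only [neg_sub]
    rw [hneg, integral_neg, hval, neg_sub]
    exact ⟨hint.neg, rfl⟩
  have hderiv : ∀ x ∈ Ici (0 : ℝ), HasDerivAt (fun s => log (a + s) - log (b + s))
      ((a + x)⁻¹ - (b + x)⁻¹) x := fun x (hx : 0 ≤ x) =>
    hasDerivAt_log_add_sub_log_add (by linarith : 0 < a + x).ne' (by linarith : 0 < b + x).ne'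
  have hnonneg : ∀ x ∈ Ioi (0 : ℝ), 0 ≤ (a + x)⁻¹ - (b + x)⁻¹ := fun x (hx : 0 < x) =>
    sub_nonneg.mpr (inv_anti₀ (by linarith) (by linarith))
  have hlim := tendsto_log_add_sub_log_add_atTop a b
  refine ⟨integrableOn_Ioi_deriv_of_nonneg' hderiv hnonneg hlim, ?_⟩
  rw [integral_Ioi_of_hasDerivAt_of_nonneg' hderiv hnonneg hlim]
  simp

theorem cfc_const_sub_inv_add_const {A : Type*} {p : A → Prop} [Ring A] [StarRing A]
    [TopologicalSpace A] [Algebra ℝ A] [ContinuousFunctionalCalculus ℝ A p] (a : A) (c s : ℝ)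
    (hs : ∀ x ∈ spectrum ℝ a, x + s ≠ 0) (ha : p a := by cfc_tac) :
    cfc (fun x => c - (x + s)⁻¹) a = algebraMap ℝ A c - Ring.inverse (a + algebraMap ℝ A s) := by
  have hcont : ContinuousOn (fun x : ℝ => x + s) (spectrum ℝ a) := by fun_prop
  rw [cfc_sub (fun _ => c) (fun x => (x + s)⁻¹) a continuousOn_const (hcont.inv₀ hs),
    cfc_const c a, cfc_inv _ a hs, cfc_add_const s (fun x => x) a, cfc_id' ℝ a]

namespace Matrix.IsHermitian

variable {d : ℕ} {A : Matrix (Fin d) (Fin d) ℂ} (hA : A.IsHermitian)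

def conjDiagonalCLM : (Fin d → ℝ) →L[ℝ] Matrix (Fin d) (Fin d) ℂ :=
  LinearMap.toContinuousLinearMap
    { toFun := fun v =>
        Unitary.conjStarAlgAut ℝ _ hA.eigenvectorUnitary (diagonal (RCLike.ofReal ∘ v))
      map_add' := fun v w => by rw [← map_add, diagonal_add]; congr 2; ext; simp
      map_smul' := fun r v => by
        rw [RingHom.id_apply, ← map_smul, ← diagonal_smul]; congr 2; ext; simp }

theorem cfc_eq_conjDiagonalCLM (f : ℝ → ℝ) : cfc f A = hA.conjDiagonalCLM (f ∘ hA.eigenvalues) :=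
  cfc_eq hA f

variable {X : Type*} [MeasurableSpace X] {μ : Measure X} (f : X → ℝ → ℝ)

theorem integrable_cfc (hf : ∀ i, Integrable (fun x => f x (hA.eigenvalues i)) μ) :
    Integrable (fun x => cfc (f x) A) μ := by
  simp only [hA.cfc_eq_conjDiagonalCLM]
  exact hA.conjDiagonalCLM.integrable_comp (Integrable.of_eval hf)

theorem integral_cfc (hf : ∀ i, Integrable (fun x => f x (hA.eigenvalues i)) μ) :
    ∫ x, cfc (f x) A ∂μ = cfc (fun r => ∫ x, f x r ∂μ) A := by
  simp only [hA.cfc_eq_conjDiagonalCLM]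
  exact (hA.conjDiagonalCLM.integral_comp_comm (Integrable.of_eval hf)).trans
    (congrArg _ (funext (eval_integral hf)))

end Matrix.IsHermitian

theorem matLog_eq_cfc {d : ℕ} {A : Matrix (Fin d) (Fin d) ℂ} (hA : A.IsHermitian) :
    matLog A = cfc log A := by
  rw [hA.cfc_eq, matLog, dif_pos hA]
  rfl

/-- Integral representation of the matrix logarithm: for positive definite `A`,
`log A = ∫₀^∞ ((1+s)⁻¹·I − (A+sI)⁻¹) ds`, the integral converging in the Bochner sense. -/
theorem matLog_eq_integral {d : ℕ} (A : Matrix (Fin d) (Fin d) ℂ) (hA : A.PosDef) :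
    IntegrableOn
        (fun s : ℝ => (1 + s)⁻¹ • (1 : Matrix (Fin d) (Fin d) ℂ)
          - (A + s • (1 : Matrix (Fin d) (Fin d) ℂ))⁻¹) (Set.Ioi 0) volume ∧
      matLog A = ∫ s in Set.Ioi (0 : ℝ),
        ((1 + s)⁻¹ • (1 : Matrix (Fin d) (Fin d) ℂ)
          - (A + s • (1 : Matrix (Fin d) (Fin d) ℂ))⁻¹) := by
  have hH := hA.isHermitian
  have hspec : ∀ x ∈ spectrum ℝ A, 0 < x := by
    rw [hH.spectrum_real_eq_range_eigenvalues]
    rintro - ⟨i, rfl⟩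
    exact hA.eigenvalues_pos i
  set f : ℝ → ℝ → ℝ := fun s x => (1 + s)⁻¹ - (x + s)⁻¹
  have hscalar : ∀ x ∈ spectrum ℝ A, IntegrableOn (f · x) (Ioi 0) ∧ ∫ s in Ioi 0, f s x = log x :=
    fun x hx => by
      simpa using integrableOn_and_integral_Ioi_inv_add_sub_inv_add one_pos (hspec x hx)
  have hint : ∀ i, IntegrableOn (f · (hH.eigenvalues i)) (Ioi 0) := fun i =>
    (hscalar _ (hH.eigenvalues_mem_spectrum_real i)).1
  have hcfc : EqOn (fun s : ℝ => (1 + s)⁻¹ • (1 : Matrix (Fin d) (Fin d) ℂ)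
      - (A + s • (1 : Matrix (Fin d) (Fin d) ℂ))⁻¹) (fun s => cfc (f s) A) (Ioi 0) :=
    fun s (hs : 0 < s) => by
      dsimp only [f]
      rw [cfc_const_sub_inv_add_const A _ s fun x hx => (add_pos (hspec x hx) hs).ne',
        nonsing_inv_eq_ringInverse, Algebra.algebraMap_eq_smul_one, Algebra.algebraMap_eq_smul_one]
  rw [integrableOn_congr_fun hcfc measurableSet_Ioi, setIntegral_congr_fun measurableSet_Ioi hcfc,
    hH.integral_cfc f hint, matLog_eq_cfc hH]
  exact ⟨hH.integrable_cfc f hint, cfc_congr fun x hx => (hscalar x hx).2.symm⟩
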